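/- arXiv:1510.08382 — 2 statements merged into one kernel-verified Lean document; each statement's English description precedes it below -/
import Mathlib

section
/- Let a : Fin m → ℝ and b : Fin s → ℝ be samples in [v, V], defining empirical CDFs P(t) = (1/m)·∑_i I(a i ≤ t) and Q(t) = (1/s)·∑_j I(b j ≤ t). Then ∫_v^V (Q(t) − P(t))² dt = (1/s²)·∑_{i,j} (V − max(b i, b j)) − (2/(s·m))·∑_{i,j} (V − max(b i, a j)) + (1/m²)·∑_{i,j} (V − max(a i, a j)). -/
lemma ind_mono (x : ℝ) : Monotone (fun t => if x ≤ t then (1:ℝ) else 0) := by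
  intro t u h
  simp only
  split_ifs with h1 h2
  · exact le_refl 1
  · exact absurd (h1.trans h) h2
  · norm_num
  · exact le_refl 0

lemma ind_intble (x v V : ℝ) : IntervalIntegrable (fun t => if x ≤ t then (1:ℝ) else 0) MeasureTheory.volume v V :=
  (ind_mono x).intervalIntegrable

lemma ind_int (v V c : ℝ) (h1 : v ≤ c) (h2 : c ≤ V) :
    (∫ t in v..V, (if c ≤ t then (1:ℝ) else 0)) = V - c := by
  rw [← intervalIntegral.integral_add_adjacent_intervals (b := c) (ind_intble c v c) (ind_intble c c V)]
  have e1 : (∫ t in v..c, (if c ≤ t then (1:ℝ) else 0)) = ∫ t in v..c, (0:ℝ) := by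
    apply intervalIntegral.integral_congr_ae
    rw [MeasureTheory.ae_iff]
    refine MeasureTheory.measure_mono_null (fun t ht => ?_) (MeasureTheory.measure_singleton c)
    simp only [Set.mem_setOf_eq, _root_.not_imp, Set.uIoc_of_le h1, Set.mem_Ioc] at ht
    push_neg at ht
    obtain ⟨⟨_, htc⟩, hne⟩ := ht
    have : c ≤ t := by by_contra hc; exact hne (by simp [hc])
    simp [le_antisymm htc this]
  have e2 : (∫ t in c..V, (if c ≤ t then (1:ℝ) else 0)) = V - c := by
    rw [intervalIntegral.integral_congr (g := fun _ => (1:ℝ))]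
    · simp
    · intro t ht
      rw [Set.uIcc_of_le h2] at ht
      simp [ht.1]
  rw [e1, e2]; simp

lemma ind_mul (x y t : ℝ) : (if x ≤ t then (1:ℝ) else 0) * (if y ≤ t then (1:ℝ) else 0)
    = (if max x y ≤ t then (1:ℝ) else 0) := by
  simp only [max_le_iff]
  split_ifs <;> simp_all

lemma intble_fun_sum {n : ℕ} {v V : ℝ} (g : Fin n → ℝ → ℝ)
    (h : ∀ i, IntervalIntegrable (g i) MeasureTheory.volume v V) :
    IntervalIntegrable (fun t => ∑ i, g i t) MeasureTheory.volume v V := by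
  have := IntervalIntegrable.sum Finset.univ (fun i _ => h i)
  rwa [Finset.sum_fn] at this

set_option maxHeartbeats 800000 in
theorem stmt_2 (m s : ℕ) (hm : 0 < m) (hs : 0 < s) (v V : ℝ)
    (a : Fin m → ℝ) (b : Fin s → ℝ)
    (ha : ∀ i, a i ∈ Set.Icc v V) (hb : ∀ j, b j ∈ Set.Icc v V) :
    (∫ t in v..V,
        ((1 / (s : ℝ)) * ∑ j, (if b j ≤ t then (1 : ℝ) else 0)
          - (1 / (m : ℝ)) * ∑ i, (if a i ≤ t then (1 : ℝ) else 0)) ^ 2)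
      = (1 / (s : ℝ) ^ 2) * ∑ i, ∑ j, (V - max (b i) (b j))
        - (2 / ((s : ℝ) * m)) * ∑ i, ∑ j, (V - max (b i) (a j))
        + (1 / (m : ℝ) ^ 2) * ∑ i, ∑ j, (V - max (a i) (a j)) := by
  have key : ∀ t : ℝ,
      ((1 / (s : ℝ)) * ∑ j, (if b j ≤ t then (1 : ℝ) else 0)
          - (1 / (m : ℝ)) * ∑ i, (if a i ≤ t then (1 : ℝ) else 0)) ^ 2
      = (1 / (s : ℝ) ^ 2) * ∑ i, ∑ j, (if max (b i) (b j) ≤ t then (1:ℝ) else 0)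
        - (2 / ((s : ℝ) * m)) * ∑ i, ∑ j, (if max (b i) (a j) ≤ t then (1:ℝ) else 0)
        + (1 / (m : ℝ) ^ 2) * ∑ i, ∑ j, (if max (a i) (a j) ≤ t then (1:ℝ) else 0) := by
    intro t
    have hbb : (∑ j, (if b j ≤ t then (1:ℝ) else 0)) * (∑ j, (if b j ≤ t then (1:ℝ) else 0))
        = ∑ i, ∑ j, (if max (b i) (b j) ≤ t then (1:ℝ) else 0) := by
      rw [Finset.sum_mul_sum]; exact Finset.sum_congr rfl fun i _ =>
        Finset.sum_congr rfl fun j _ => ind_mul _ _ _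
    have hba : (∑ j, (if b j ≤ t then (1:ℝ) else 0)) * (∑ i, (if a i ≤ t then (1:ℝ) else 0))
        = ∑ i, ∑ j, (if max (b i) (a j) ≤ t then (1:ℝ) else 0) := by
      rw [Finset.sum_mul_sum]; exact Finset.sum_congr rfl fun i _ =>
        Finset.sum_congr rfl fun j _ => ind_mul _ _ _
    have haa : (∑ i, (if a i ≤ t then (1:ℝ) else 0)) * (∑ i, (if a i ≤ t then (1:ℝ) else 0))
        = ∑ i, ∑ j, (if max (a i) (a j) ≤ t then (1:ℝ) else 0) := by
      rw [Finset.sum_mul_sum]; exact Finset.sum_congr rfl fun i _ =>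
        Finset.sum_congr rfl fun j _ => ind_mul _ _ _
    rw [← hbb, ← hba, ← haa]; ring
  have intbl : ∀ (c : ℝ), IntervalIntegrable (fun t => if c ≤ t then (1:ℝ) else 0)
      MeasureTheory.volume v V := fun c => ind_intble c v V
  have intbl2 : ∀ {n k : ℕ} (f : Fin n → Fin k → ℝ), IntervalIntegrable
      (fun t => ∑ i, ∑ j, (if f i j ≤ t then (1:ℝ) else 0)) MeasureTheory.volume v V := by
    intro n k f
    exact intble_fun_sum _ fun i => intble_fun_sum _ fun j => intbl _
  have intsum : ∀ {n k : ℕ} (f : Fin n → Fin k → ℝ), (∀ i j, f i j ∈ Set.Icc v V) →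
      (∫ t in v..V, ∑ i, ∑ j, (if f i j ≤ t then (1:ℝ) else 0)) = ∑ i, ∑ j, (V - f i j) := by
    intro n k f hf
    rw [intervalIntegral.integral_finset_sum (fun i _ =>
      intble_fun_sum _ fun j => intbl _)]
    refine Finset.sum_congr rfl fun i _ => ?_
    rw [intervalIntegral.integral_finset_sum (fun j _ => intbl _)]
    exact Finset.sum_congr rfl fun j _ => ind_int v V _ (hf i j).1 (hf i j).2
  calc (∫ t in v..V,
        ((1 / (s : ℝ)) * ∑ j, (if b j ≤ t then (1 : ℝ) else 0)
          - (1 / (m : ℝ)) * ∑ i, (if a i ≤ t then (1 : ℝ) else 0)) ^ 2)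
      = ∫ t in v..V,
        ((1 / (s : ℝ) ^ 2) * ∑ i, ∑ j, (if max (b i) (b j) ≤ t then (1:ℝ) else 0)
        - (2 / ((s : ℝ) * m)) * ∑ i, ∑ j, (if max (b i) (a j) ≤ t then (1:ℝ) else 0)
        + (1 / (m : ℝ) ^ 2) * ∑ i, ∑ j, (if max (a i) (a j) ≤ t then (1:ℝ) else 0)) := by
        exact intervalIntegral.integral_congr fun t _ => key t
    _ = (1 / (s : ℝ) ^ 2) * ∑ i, ∑ j, (V - max (b i) (b j))
        - (2 / ((s : ℝ) * m)) * ∑ i, ∑ j, (V - max (b i) (a j))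
        + (1 / (m : ℝ) ^ 2) * ∑ i, ∑ j, (V - max (a i) (a j)) := by
        rw [intervalIntegral.integral_add (IntervalIntegrable.sub
              ((intbl2 _).const_mul _) ((intbl2 _).const_mul _)) ((intbl2 _).const_mul _),
            intervalIntegral.integral_sub ((intbl2 _).const_mul _) ((intbl2 _).const_mul _),
            intervalIntegral.integral_const_mul, intervalIntegral.integral_const_mul,
            intervalIntegral.integral_const_mul,
            intsum _ (fun i j => ⟨le_max_of_le_left (hb i).1, max_le (hb i).2 (hb j).2⟩),
            intsum _ (fun i j => ⟨le_max_of_le_left (hb i).1, max_le (hb i).2 (ha j).2⟩),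
            intsum _ (fun i j => ⟨le_max_of_le_left (ha i).1, max_le (ha i).2 (ha j).2⟩)]
end

section
/- Let D be a finite linearly ordered set, a : Fin m → D and b : Fin s → D samples, with empirical CDFs P(t) = (1/m)·∑_i I(a i ≤ t) and Q(t) = (1/s)·∑_j I(b j ≤ t). Then ∑_{t ∈ D} (Q(t) − P(t))² = (1/s²)·∑_{i,j} h(b i, b j) − (2/(s·m))·∑_{i,j} h(b i, a j) + (1/m²)·∑_{i,j} h(a i, a j), where h(x,y) = |{t ∈ D : t ≥ max(x,y)}|. -/
theorem stmt_3 (D : Type*) [Fintype D] [LinearOrder D] (m s : ℕ) (hm : 0 < m) (hs : 0 < s)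
    (a : Fin m → D) (b : Fin s → D)
    (h : D → D → ℝ)
    (hh : ∀ x y, h x y = (Finset.univ.filter (fun t : D => max x y ≤ t)).card) :
    ∑ t : D,
        ((1 / (s : ℝ)) * ∑ j, (if b j ≤ t then (1 : ℝ) else 0)
          - (1 / (m : ℝ)) * ∑ i, (if a i ≤ t then (1 : ℝ) else 0)) ^ 2
      = (1 / (s : ℝ) ^ 2) * ∑ i, ∑ j, h (b i) (b j)
        - (2 / ((s : ℝ) * m)) * ∑ i, ∑ j, h (b i) (a j)
        + (1 / (m : ℝ) ^ 2) * ∑ i, ∑ j, h (a i) (a j) := by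
  have key : ∀ x y : D,
      ∑ t : D, (if x ≤ t then (1 : ℝ) else 0) * (if y ≤ t then (1 : ℝ) else 0) = h x y := by
    intro x y
    rw [hh]
    rw [show (((Finset.univ.filter (fun t : D => max x y ≤ t)).card : ℝ)) =
        ∑ t : D, (if max x y ≤ t then (1 : ℝ) else 0) by
      rw [Finset.sum_boole]]
    refine Finset.sum_congr rfl fun t _ => ?_
    by_cases hx : x ≤ t <;> by_cases hy : y ≤ t <;> simp [hx, hy, max_le_iff]
  set A : D → ℝ := fun t => ∑ j, (if b j ≤ t then (1 : ℝ) else 0) with hA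
  set B : D → ℝ := fun t => ∑ i, (if a i ≤ t then (1 : ℝ) else 0) with hB
  have swap3 : ∀ {n p : ℕ} (f : Fin n → Fin p → D → ℝ),
      ∑ t : D, ∑ i, ∑ j, f i j t = ∑ i, ∑ j, ∑ t : D, f i j t := by
    intro n p f
    rw [Finset.sum_comm]
    exact Finset.sum_congr rfl fun i _ => Finset.sum_comm
  have prod_eq : ∀ {n p : ℕ} (u : Fin n → D) (v : Fin p → D),
      ∑ t : D, (∑ i, (if u i ≤ t then (1 : ℝ) else 0)) * (∑ j, (if v j ≤ t then (1 : ℝ) else 0))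
        = ∑ i, ∑ j, h (u i) (v j) := by
    intro n p u v
    have : ∀ t : D, (∑ i, (if u i ≤ t then (1 : ℝ) else 0)) *
        (∑ j, (if v j ≤ t then (1 : ℝ) else 0))
        = ∑ i, ∑ j, (if u i ≤ t then (1 : ℝ) else 0) * (if v j ≤ t then (1 : ℝ) else 0) := by
      intro t
      rw [Finset.sum_mul_sum]
    simp_rw [this]
    rw [swap3]
    exact Finset.sum_congr rfl fun i _ => Finset.sum_congr rfl fun j _ => key _ _
  have expand : ∀ t : D, ((1 / (s : ℝ)) * A t - (1 / (m : ℝ)) * B t) ^ 2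
      = (1 / (s : ℝ) ^ 2) * (A t * A t) - (2 / ((s : ℝ) * m)) * (A t * B t)
        + (1 / (m : ℝ) ^ 2) * (B t * B t) := by
    intro t; ring
  calc ∑ t : D, ((1 / (s : ℝ)) * A t - (1 / (m : ℝ)) * B t) ^ 2
      = ∑ t : D, ((1 / (s : ℝ) ^ 2) * (A t * A t) - (2 / ((s : ℝ) * m)) * (A t * B t)
        + (1 / (m : ℝ) ^ 2) * (B t * B t)) := Finset.sum_congr rfl fun t _ => expand t
    _ = (1 / (s : ℝ) ^ 2) * ∑ t : D, A t * A t - (2 / ((s : ℝ) * m)) * ∑ t : D, A t * B t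
        + (1 / (m : ℝ) ^ 2) * ∑ t : D, B t * B t := by
      rw [Finset.sum_add_distrib, Finset.sum_sub_distrib, Finset.mul_sum, Finset.mul_sum,
        Finset.mul_sum]
    _ = _ := by rw [prod_eq b b, prod_eq b a, prod_eq a a]
end
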